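/- (Composition–Diamond lemma, (ii) ⇒ (iii)): Let S ⊂ D(X) be monic. If every nonzero f ∈ Id(S) has leading term of the form a·d^ī(s̄)·b for some s ∈ S, then Irr(S) = {u ∈ T : u ≠ a·d^ī(s̄)·b for all s ∈ S, a, b ∈ T, D^ī} is a k-linear basis of the quotient D(X|S) = D(X)/Id(S). -/

import Mathlib

/-- A letter `D^ī(x)` of the free differential algebra: the word `ī` of operator
indices together with the generator `x`. -/
abbrev Letter (J X : Type*) := List J × X

variable {k J X : Type*} [CommRing k]

/-- The monomial of `D(X) = k⟨(D^ω(X))^*⟩` corresponding to a word `u ∈ T`. -/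
noncomputable def monoW (u : List (Letter J X)) : MonoidAlgebra k (FreeMonoid (Letter J X)) :=
  MonoidAlgebra.single (FreeMonoid.ofList u) 1

/-- Action of the derivation `D_j` on a word, defined by the Leibniz rule. -/
noncomputable def derivMon (j : J) : List (Letter J X) → MonoidAlgebra k (FreeMonoid (Letter J X))
  | [] => 0
  | (a, x) :: v =>
      monoW ((j :: a, x) :: v) + monoW [(a, x)] * derivMon j v

/-- The derivation `D_j` on the free differential algebra `D(X)`. -/
noncomputable def Dop (j : J) :
    MonoidAlgebra k (FreeMonoid (Letter J X)) →ₗ[k] MonoidAlgebra k (FreeMonoid (Letter J X)) :=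
  (Finsupp.lsum k fun (u : FreeMonoid (Letter J X)) =>
    LinearMap.toSpanSingleton k (MonoidAlgebra k (FreeMonoid (Letter J X))) (derivMon j u.toList)).comp
    (MonoidAlgebra.coeffLinearEquiv k).toLinearMap

/-- The composite operator `D^j̄ = D_{j₁} ∘ ⋯ ∘ D_{jₙ}`. -/
noncomputable def Dops (jb : List J) :
    MonoidAlgebra k (FreeMonoid (Letter J X)) →ₗ[k] MonoidAlgebra k (FreeMonoid (Letter J X)) :=
  jb.foldr (fun j m => (Dop j).comp m) LinearMap.id

/-- `d^j̄(u)`: prepend the operator word `j̄` to the first letter of `u`. -/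
def dHat (jb : List J) : List (Letter J X) → List (Letter J X)
  | [] => []
  | (a, x) :: v => (jb ++ a, x) :: v

/-- Coefficient of the word `u` in `f ∈ D(X)`. -/
noncomputable def coeffW (f : MonoidAlgebra k (FreeMonoid (Letter J X)))
    (u : List (Letter J X)) : k := f.coeff (FreeMonoid.ofList u)

section Order
variable [LinearOrder J] [LinearOrder X]

/-- The order on letters: compare `wt(D^ī(x)) = (x; m, i₁, …, i_m)` lexicographically. -/
def LetterLt (a b : Letter J X) : Prop :=
  a.2 < b.2 ∨ (a.2 = b.2 ∧ (a.1.length < b.1.length ∨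
    (a.1.length = b.1.length ∧ List.Lex (· < ·) a.1 b.1)))

/-- The deg-lex order on words: first by length, then lexicographically. -/
def DegLexLt (u v : List (Letter J X)) : Prop :=
  u.length < v.length ∨ (u.length = v.length ∧ List.Lex LetterLt u v)

/-- `u` is the leading term of `f`. -/
def IsLT (f : MonoidAlgebra k (FreeMonoid (Letter J X))) (u : List (Letter J X)) : Prop :=
  coeffW f u ≠ 0 ∧ ∀ v, coeffW f v ≠ 0 → v ≠ u → DegLexLt v u

/-- `f` is monic with leading term `u`. -/
def MonicW (f : MonoidAlgebra k (FreeMonoid (Letter J X))) (u : List (Letter J X)) : Prop :=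
  IsLT f u ∧ coeffW f u = 1

end Order

/-- Membership in the `D`-ideal generated by `S`. -/
inductive InDIdeal (S : Set (MonoidAlgebra k (FreeMonoid (Letter J X)))) :
    MonoidAlgebra k (FreeMonoid (Letter J X)) → Prop
  | of : ∀ s ∈ S, InDIdeal S s
  | zero : InDIdeal S 0
  | add : ∀ {a b}, InDIdeal S a → InDIdeal S b → InDIdeal S (a + b)
  | smul : ∀ (c : k) {a}, InDIdeal S a → InDIdeal S (c • a)
  | mul_left : ∀ (g) {a}, InDIdeal S a → InDIdeal S (g * a)
  | mul_right : ∀ (g) {a}, InDIdeal S a → InDIdeal S (a * g)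
  | deriv : ∀ (j : J) {a}, InDIdeal S a → InDIdeal S (Dop j a)

/-- `(S,𝒟)`-words: `a · D^j̄(s) · b` with `s ∈ S`. -/
def IsSDWord (S : Set (MonoidAlgebra k (FreeMonoid (Letter J X))))
    (g : MonoidAlgebra k (FreeMonoid (Letter J X))) : Prop :=
  ∃ (a b : List (Letter J X)) (jb : List J), ∃ s ∈ S, g = monoW a * Dops jb s * monoW b

section Order2
variable [LinearOrder J] [LinearOrder X]

/-- `f ≡ 0 mod (S, w)`: `f` is a linear combination of `(S,𝒟)`-words with leading term `< w`. -/
def TrivMod (S : Set (MonoidAlgebra k (FreeMonoid (Letter J X))))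
    (w : List (Letter J X)) (f : MonoidAlgebra k (FreeMonoid (Letter J X))) : Prop :=
  f ∈ Submodule.span k {g | IsSDWord S g ∧ ∃ l, IsLT g l ∧ DegLexLt l w}

/-- `S` is a Gröbner–Shirshov basis: all compositions of elements of `S` are trivial. -/
def IsGSB (S : Set (MonoidAlgebra k (FreeMonoid (Letter J X)))) : Prop :=
  ∀ f ∈ S, ∀ g ∈ S, ∀ fb gb, MonicW f fb → MonicW g gb →
    (∀ a b jb, gb ≠ [] → fb = a ++ dHat jb gb ++ b →
        TrivMod S fb (f - monoW a * Dops jb g * monoW b)) ∧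
    (∀ ib b, fb ≠ [] → dHat ib fb = gb ++ b →
        TrivMod S (dHat ib fb) (Dops ib f - g * monoW b)) ∧
    (∀ a b jb, a ≠ [] → b ≠ [] → fb ≠ [] → gb ≠ [] →
        fb ++ b = a ++ dHat jb gb → (fb ++ b).length < fb.length + gb.length →
        TrivMod S (fb ++ b) (f * monoW b - monoW a * Dops jb g))

/-- `Irr(S)`: words containing no subword `d^ī(s̄)` with `s ∈ S`. -/
def Irr (S : Set (MonoidAlgebra k (FreeMonoid (Letter J X)))) : Set (List (Letter J X)) :=
  {u | ¬ ∃ (a b : List (Letter J X)) (ib : List J), ∃ s ∈ S, ∃ sb, IsLT s sb ∧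
        u = a ++ dHat ib sb ++ b}

end Order2


/-! ### Auxiliary lemmas -/

section AuxOrder
variable [LinearOrder J] [LinearOrder X]

theorem letterLt_trichot (a b : Letter J X) : LetterLt a b ∨ a = b ∨ LetterLt b a := by
  rcases lt_trichotomy a.2 b.2 with h|h|h
  · exact Or.inl (Or.inl h)
  · rcases Nat.lt_trichotomy a.1.length b.1.length with h2|h2|h2
    · exact Or.inl (Or.inr ⟨h, Or.inl h2⟩)
    · rcases trichotomous_of (List.Lex ((·<·) : J → J → Prop)) a.1 b.1 with h3|h3|h3
      · exact Or.inl (Or.inr ⟨h, Or.inr ⟨h2, h3⟩⟩)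
      · exact Or.inr (Or.inl (Prod.ext h3 h))
      · exact Or.inr (Or.inr (Or.inr ⟨h.symm, Or.inr ⟨h2.symm, h3⟩⟩))
    · exact Or.inr (Or.inr (Or.inr ⟨h.symm, Or.inl h2⟩))
  · exact Or.inr (Or.inr (Or.inl h))

theorem lex_trans_aux {α : Type*} {r : α → α → Prop} (htr : ∀ a b c, r a b → r b c → r a c) :
    ∀ {l₁ l₂ l₃ : List α}, List.Lex r l₁ l₂ → List.Lex r l₂ l₃ → List.Lex r l₁ l₃ := by
  intro l₁ l₂ l₃ h1 h2
  induction h1 generalizing l₃ with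
  | nil => cases h2 <;> exact List.Lex.nil
  | rel h => cases h2 with
    | rel h' => exact List.Lex.rel (htr _ _ _ h h')
    | cons _ => exact List.Lex.rel h
  | cons _ ih => cases h2 with
    | rel h' => exact List.Lex.rel h'
    | cons h' => exact List.Lex.cons (ih h')

theorem letterLt_trans {a b c : Letter J X} (h1 : LetterLt a b) (h2 : LetterLt b c) :
    LetterLt a c := by
  rcases h1 with h1|⟨e1,h1⟩
  · rcases h2 with h2|⟨e2,h2⟩
    · exact Or.inl (h1.trans h2)
    · exact Or.inl (e2 ▸ h1)
  · rcases h2 with h2|⟨e2,h2⟩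
    · exact Or.inl (e1 ▸ h2)
    · refine Or.inr ⟨e1.trans e2, ?_⟩
      rcases h1 with h1|⟨f1,h1⟩
      · rcases h2 with h2|⟨f2,h2⟩
        · exact Or.inl (h1.trans h2)
        · exact Or.inl (f2 ▸ h1)
      · rcases h2 with h2|⟨f2,h2⟩
        · exact Or.inl (f1 ▸ h2)
        · exact Or.inr ⟨f1.trans f2, lex_trans_aux (r := ((·<·) : J → J → Prop)) (fun _ _ _ h h' => lt_trans h h') h1 h2⟩

theorem letterLt_irrefl (a : Letter J X) : ¬ LetterLt a a := by
  rintro (h|⟨-,h|⟨-,h⟩⟩)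
  · exact lt_irrefl _ h
  · exact lt_irrefl _ h
  · exact irrefl_of (List.Lex ((·<·) : J → J → Prop)) a.1 h

instance : IsTrichotomous (Letter J X) LetterLt :=
  ⟨fun a b h1 h2 => by rcases letterLt_trichot a b with h|h|h <;> tauto⟩
instance : IsTrans (Letter J X) LetterLt := ⟨fun _ _ _ => letterLt_trans⟩
instance : IsIrrefl (Letter J X) LetterLt := ⟨letterLt_irrefl⟩
instance : IsStrictTotalOrder (Letter J X) LetterLt := {}

theorem degLexLt_trans {u v w : List (Letter J X)} (h1 : DegLexLt u v) (h2 : DegLexLt v w) :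
    DegLexLt u w := by
  rcases h1 with h1|⟨e1,h1⟩ <;> rcases h2 with h2|⟨e2,h2⟩
  · exact Or.inl (h1.trans h2)
  · exact Or.inl (e2 ▸ h1)
  · exact Or.inl (e1 ▸ h2)
  · exact Or.inr ⟨e1.trans e2, lex_trans_aux (r := LetterLt) (fun _ _ _ h h' => letterLt_trans h h') h1 h2⟩

theorem degLexLt_irrefl (u : List (Letter J X)) : ¬ DegLexLt u u := by
  rintro (h|⟨-,h⟩)
  · exact lt_irrefl _ h
  · exact irrefl_of (List.Lex (LetterLt (J:=J) (X:=X))) u h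

theorem degLexLt_asymm {u v : List (Letter J X)} (h1 : DegLexLt u v) : ¬ DegLexLt v u :=
  fun h2 => degLexLt_irrefl u (degLexLt_trans h1 h2)

theorem degLexLt_trichot (u v : List (Letter J X)) : DegLexLt u v ∨ u = v ∨ DegLexLt v u := by
  rcases Nat.lt_trichotomy u.length v.length with h|h|h
  · exact Or.inl (Or.inl h)
  · rcases trichotomous_of (List.Lex (LetterLt (J:=J) (X:=X))) u v with h2|h2|h2
    · exact Or.inl (Or.inr ⟨h, h2⟩)
    · exact Or.inr (Or.inl h2)
    · exact Or.inr (Or.inr (Or.inr ⟨h.symm, h2⟩))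
  · exact Or.inr (Or.inr (Or.inl h))

end AuxOrder

/-- Generic deg-lex order, for well-foundedness. -/
def DegLexG {α : Type*} (r : α → α → Prop) (u v : List α) : Prop :=
  u.length < v.length ∨ (u.length = v.length ∧ List.Lex r u v)

theorem degLexG_wf {α : Type*} {r : α → α → Prop} (hr : WellFounded r) :
    WellFounded (DegLexG r) := by
  have key : ∀ n (u : List α), u.length ≤ n → Acc (DegLexG r) u := by
    intro n
    induction n with
    | zero =>
      intro u hu
      have hu0 : u = [] := List.length_eq_zero_iff.mp (Nat.le_zero.mp hu)
      subst hu0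
      constructor
      rintro v (h|⟨h,hl⟩)
      · omega
      · cases hl
    | succ n H =>
      have aux : ∀ a, Acc r a → ∀ u', Acc (DegLexG r) u' → u'.length = n →
          Acc (DegLexG r) (a :: u') := by
        intro a ha
        induction ha with
        | intro a _ iha =>
          intro u' hu'
          induction hu' with
          | intro u' _ ihu =>
            intro hlen
            constructor
            rintro v (h|⟨h,hl⟩)
            · exact H v (by simp [hlen] at h ⊢; omega)
            · simp [hlen] at h
              cases hl with
              | nil => simp at h
              | @rel b v' _ _ hba =>
                exact iha b hba v' (H v' (by simp at h; omega)) (by simp at h; omega)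
              | @cons _ v' _ hlex =>
                exact ihu v' (Or.inr ⟨by simp at h; omega, hlex⟩) (by simp at h; omega)
      intro u hu
      rcases Nat.lt_or_ge u.length (n+1) with h|h
      · exact H u (by omega)
      · have hlen : u.length = n + 1 := by omega
        match u with
        | a :: u' =>
          exact aux a (hr.apply a) u' (H u' (by simp at hlen; omega)) (by simp at hlen; omega)
  exact ⟨fun u => key u.length u le_rfl⟩

section AuxWF
variable [LinearOrder J] [LinearOrder X] [IsWellOrder J (· < ·)] [IsWellOrder X (· < ·)]

theorem letterLt_wf : WellFounded (LetterLt (J:=J) (X:=X)) := by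
  have h1 : WellFounded (DegLexG ((·<·) : J → J → Prop)) := degLexG_wf IsWellFounded.wf
  have h2 := WellFounded.prod_lex (IsWellFounded.wf : WellFounded ((·<·) : X → X → Prop)) h1
  refine Subrelation.wf ?_ (InvImage.wf (fun a : Letter J X => (a.2, a.1)) h2)
  rintro a b (h|⟨h,h'⟩)
  · exact Prod.Lex.left _ _ h
  · obtain ⟨al, ax⟩ := a; obtain ⟨bl, bx⟩ := b
    dsimp at h h' ⊢
    subst h
    exact Prod.Lex.right _ h'

theorem degLexLt_wf : WellFounded (DegLexLt (J:=J) (X:=X)) :=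
  Subrelation.wf (fun h => h) (degLexG_wf letterLt_wf)

end AuxWF

/-! ### Coefficient lemmas -/

theorem coeffW_add (f g : MonoidAlgebra k (FreeMonoid (Letter J X))) (u) :
    coeffW (f + g) u = coeffW f u + coeffW g u := rfl

theorem coeffW_sub (f g : MonoidAlgebra k (FreeMonoid (Letter J X))) (u) :
    coeffW (f - g) u = coeffW f u - coeffW g u := rfl

theorem coeffW_zero (u : List (Letter J X)) :
    coeffW (0 : MonoidAlgebra k (FreeMonoid (Letter J X))) u = 0 := rfl

theorem coeffW_monoW_self (u : List (Letter J X)) :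
    coeffW (monoW u : MonoidAlgebra k (FreeMonoid (Letter J X))) u = 1 := by
  classical
  simp [coeffW, monoW, MonoidAlgebra.coeff_single, Finsupp.single_apply]

theorem coeffW_monoW_ne {u v : List (Letter J X)} (h : v ≠ u) :
    coeffW (monoW u : MonoidAlgebra k (FreeMonoid (Letter J X))) v = 0 := by
  classical
  simp only [coeffW, monoW, MonoidAlgebra.coeff_single, Finsupp.single_apply]
  rw [if_neg (fun he => h (FreeMonoid.ofList.injective he.symm))]

theorem sandwich (p q : List (Letter J X)) (f : MonoidAlgebra k (FreeMonoid (Letter J X))) :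
    (monoW p * f * monoW q).coeff = Finsupp.mapDomain
      (fun x => FreeMonoid.ofList p * x * FreeMonoid.ofList q) f.coeff := by
  induction f using MonoidAlgebra.induction_linear with
  | zero => simp
  | add f g hf hg => rw [mul_add, add_mul, MonoidAlgebra.coeff_add, MonoidAlgebra.coeff_add, hf, hg,
      Finsupp.mapDomain_add]
  | single a b =>
    rw [monoW, monoW, MonoidAlgebra.single_mul_single, MonoidAlgebra.single_mul_single,
      MonoidAlgebra.coeff_single, MonoidAlgebra.coeff_single, Finsupp.mapDomain_single]
    simp

theorem sandwich_inj (p q : List (Letter J X)) :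
    Function.Injective (fun x : FreeMonoid (Letter J X) =>
      FreeMonoid.ofList p * x * FreeMonoid.ofList q) := by
  intro x y h
  have h2 := congrArg FreeMonoid.toList h
  simp only [FreeMonoid.toList_mul, FreeMonoid.toList_ofList] at h2
  apply FreeMonoid.toList.injective
  have h3 : p ++ (FreeMonoid.toList x ++ q) = p ++ (FreeMonoid.toList y ++ q) := by
    simpa using h2
  exact List.append_cancel_right (List.append_cancel_left h3)

theorem coeffW_sandwich (p q : List (Letter J X)) (f : MonoidAlgebra k (FreeMonoid (Letter J X)))
    (w : List (Letter J X)) :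
    coeffW (monoW p * f * monoW q) (p ++ w ++ q) = coeffW f w := by
  rw [coeffW, coeffW, sandwich]
  have h : FreeMonoid.ofList (p ++ w ++ q)
      = FreeMonoid.ofList p * FreeMonoid.ofList w * FreeMonoid.ofList q := rfl
  rw [h]
  exact Finsupp.mapDomain_apply (sandwich_inj p q) f.coeff _

theorem coeffW_sandwich_supp (p q : List (Letter J X))
    (f : MonoidAlgebra k (FreeMonoid (Letter J X))) (z : List (Letter J X))
    (h : coeffW (monoW p * f * monoW q) z ≠ 0) :
    ∃ w, z = p ++ w ++ q ∧ coeffW f w ≠ 0 := by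
  classical
  rw [coeffW, sandwich] at h
  have hz : FreeMonoid.ofList z ∈ (Finsupp.mapDomain
      (fun x => FreeMonoid.ofList p * x * FreeMonoid.ofList q) f.coeff).support :=
    Finsupp.mem_support_iff.mpr h
  have hmem := Finsupp.mapDomain_support hz
  rw [Finset.mem_image] at hmem
  obtain ⟨x, hx, hxe⟩ := hmem
  refine ⟨FreeMonoid.toList x, ?_, ?_⟩
  · apply FreeMonoid.ofList.injective
    rw [← hxe]
    show _ = FreeMonoid.ofList p * FreeMonoid.ofList (FreeMonoid.toList x) * FreeMonoid.ofList q
    rw [FreeMonoid.ofList_toList]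
  · rw [coeffW, FreeMonoid.ofList_toList]
    exact Finsupp.mem_support_iff.mp hx

theorem monoW_nil : (monoW [] : MonoidAlgebra k (FreeMonoid (Letter J X))) = 1 := rfl

theorem monoW_mul (u v : List (Letter J X)) :
    (monoW u : MonoidAlgebra k (FreeMonoid (Letter J X))) * monoW v = monoW (u ++ v) := by
  rw [monoW, monoW, MonoidAlgebra.single_mul_single, one_mul]; rfl

theorem coeffW_lmul_supp (p : List (Letter J X))
    (f : MonoidAlgebra k (FreeMonoid (Letter J X))) (z : List (Letter J X))
    (h : coeffW (monoW p * f) z ≠ 0) : ∃ w, z = p ++ w ∧ coeffW f w ≠ 0 := by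
  have h2 : coeffW (monoW p * f * monoW []) z ≠ 0 := by rwa [monoW_nil, mul_one]
  obtain ⟨w, hw, hc⟩ := coeffW_sandwich_supp p [] f z h2
  exact ⟨w, by simpa using hw, hc⟩

theorem Dop_apply (j : J) (f : MonoidAlgebra k (FreeMonoid (Letter J X))) :
    Dop j f = f.coeff.sum fun u c => c • derivMon j (FreeMonoid.toList u) := by
  rw [Dop, LinearMap.comp_apply]
  erw [Finsupp.lsum_apply]
  rfl

theorem coeffW_Dop (j : J) (f : MonoidAlgebra k (FreeMonoid (Letter J X))) (w) :
    coeffW (Dop j f) w = f.coeff.sum fun u c => c * coeffW (derivMon j (FreeMonoid.toList u)) w := by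
  rw [Dop_apply, coeffW, MonoidAlgebra.coeff_finsuppSum, Finsupp.sum_apply]
  rfl


/-! ### dHat and derivMon lemmas -/

theorem dHat_length (jb : List J) (u : List (Letter J X)) : (dHat jb u).length = u.length := by
  cases u with
  | nil => rfl
  | cons h t => obtain ⟨a,x⟩ := h; rfl

theorem dHat_nilops (u : List (Letter J X)) : dHat ([] : List J) u = u := by
  cases u with
  | nil => rfl
  | cons h t => obtain ⟨a,x⟩ := h; simp [dHat]

theorem dHat_ne_nil {u : List (Letter J X)} (jb : List J) (h : u ≠ []) : dHat jb u ≠ [] := by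
  cases u with
  | nil => exact absurd rfl h
  | cons hd t => obtain ⟨a,x⟩ := hd; exact List.cons_ne_nil _ _

theorem dHat_dHat (j : J) (jb : List J) (u : List (Letter J X)) :
    dHat [j] (dHat jb u) = dHat (j :: jb) u := by
  cases u with
  | nil => rfl
  | cons hd t => obtain ⟨a,x⟩ := hd; simp [dHat]

theorem lex_append_left {α : Type*} {r : α → α → Prop} (p : List α) {u v : List α}
    (h : List.Lex r u v) : List.Lex r (p ++ u) (p ++ v) := by
  induction p with
  | nil => exact h
  | cons a p ih => exact List.Lex.cons ih

theorem lex_append_right {α : Type*} {r : α → α → Prop} (q : List α) {u v : List α}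
    (h : List.Lex r u v) : u.length = v.length → List.Lex r (u ++ q) (v ++ q) := by
  induction h with
  | nil => intro hlen; simp at hlen
  | rel h1 => intro _; exact List.Lex.rel h1
  | cons h1 ih => intro hlen; exact List.Lex.cons (ih (by simpa using hlen))

section AuxOrder2
variable [LinearOrder J] [LinearOrder X]

theorem degLexLt_append (p q : List (Letter J X)) {v w : List (Letter J X)}
    (h : DegLexLt v w) : DegLexLt (p ++ v ++ q) (p ++ w ++ q) := by
  rcases h with h|⟨e,hl⟩
  · left; simp only [List.length_append]; omega
  · right
    refine ⟨by simp [e], ?_⟩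
    rw [List.append_assoc, List.append_assoc]
    exact lex_append_left p (lex_append_right q hl e)

theorem dHat_mono (jb : List J) {v u : List (Letter J X)} (hv : v ≠ []) (hu : u ≠ [])
    (h : DegLexLt v u) : DegLexLt (dHat jb v) (dHat jb u) := by
  rcases h with h|⟨e,hl⟩
  · left; rw [dHat_length, dHat_length]; exact h
  · right
    refine ⟨by rw [dHat_length, dHat_length]; exact e, ?_⟩
    match v, u, hl with
    | (a,x)::t, (c,y)::s, hl =>
      show List.Lex LetterLt ((jb++a,x)::t) ((jb++c,y)::s)
      cases hl with
      | rel h1 =>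
        apply List.Lex.rel
        rcases h1 with h1|⟨e1,h1|⟨f1,h1⟩⟩
        · exact Or.inl h1
        · exact Or.inr ⟨e1, Or.inl (by simp only [List.length_append]; exact Nat.add_lt_add_left h1 _)⟩
        · exact Or.inr ⟨e1, Or.inr ⟨by simp [f1], lex_append_left jb h1⟩⟩
      | cons h1 => exact List.Lex.cons h1

theorem derivMon_length (j : J) :
    ∀ (v w : List (Letter J X)), coeffW (derivMon j v : MonoidAlgebra k (FreeMonoid (Letter J X))) w ≠ 0 →
      w.length = v.length := by
  intro v
  induction v with
  | nil => intro w h; exact absurd (coeffW_zero w) h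
  | cons hd t ih =>
    obtain ⟨a,x⟩ := hd
    intro w h
    rw [show derivMon j ((a,x)::t) = monoW ((j :: a, x) :: t) + monoW [(a, x)] * derivMon j t
        from rfl, coeffW_add] at h
    by_cases hw : w = (j :: a, x) :: t
    · subst hw; simp
    · rw [coeffW_monoW_ne hw, zero_add] at h
      obtain ⟨w', rfl, hc⟩ := coeffW_lmul_supp _ _ _ h
      have := ih w' hc
      simp only [List.length_append, List.length_cons, List.length_nil] at *
      omega

theorem derivMon_coeff_dHat (j : J) {v : List (Letter J X)} (hv : v ≠ []) :
    coeffW (derivMon j v : MonoidAlgebra k (FreeMonoid (Letter J X))) (dHat [j] v) = 1 := by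
  match v, hv with
  | (a,x)::t, _ =>
    have hd : dHat [j] ((a,x)::t) = (j :: a, x) :: t := rfl
    rw [hd, show derivMon j ((a,x)::t) = monoW ((j :: a, x) :: t) + monoW [(a, x)] * derivMon j t
        from rfl, coeffW_add, coeffW_monoW_self]
    have h0 : coeffW (monoW [(a,x)] * derivMon j t : MonoidAlgebra k (FreeMonoid (Letter J X)))
        ((j :: a, x) :: t) = 0 := by
      by_contra h0
      obtain ⟨w', he, _⟩ := coeffW_lmul_supp _ _ _ h0
      simp only [List.singleton_append] at he
      injection he with h1 _
      have := congrArg (fun p : Letter J X => p.1.length) h1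
      simp at this
    rw [h0, add_zero]

theorem derivMon_supp_le (j : J) (v w : List (Letter J X))
    (h : coeffW (derivMon j v : MonoidAlgebra k (FreeMonoid (Letter J X))) w ≠ 0) :
    w = dHat [j] v ∨ DegLexLt w (dHat [j] v) := by
  cases v with
  | nil => exact absurd (coeffW_zero w) h
  | cons hd t =>
    obtain ⟨a,x⟩ := hd
    rw [show derivMon j ((a,x)::t) = monoW ((j :: a, x) :: t) + monoW [(a, x)] * derivMon j t
        from rfl, coeffW_add] at h
    by_cases hw : w = (j :: a, x) :: t
    · exact Or.inl hw
    · rw [coeffW_monoW_ne hw, zero_add] at h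
      obtain ⟨w', rfl, hc⟩ := coeffW_lmul_supp _ _ _ h
      have hlen := derivMon_length j t w' hc
      right
      refine Or.inr ⟨by rw [dHat_length]; simpa using hlen, ?_⟩
      show List.Lex LetterLt ((a,x) :: w') ((j :: a, x) :: t)
      exact List.Lex.rel (Or.inr ⟨rfl, Or.inl (by simp)⟩)

/-- `f` is bounded by `u`: every word in the support of `f` is `u` or smaller. -/
def Bd (f : MonoidAlgebra k (FreeMonoid (Letter J X))) (u : List (Letter J X)) : Prop :=
  ∀ w, coeffW f w ≠ 0 → w = u ∨ DegLexLt w u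

theorem derivMon_coeff_lt (j : J) {v u : List (Letter J X)} (hu : u ≠ [])
    (hv : DegLexLt v u) :
    coeffW (derivMon j v : MonoidAlgebra k (FreeMonoid (Letter J X))) (dHat [j] u) = 0 := by
  cases v with
  | nil => exact coeffW_zero _
  | cons hd t =>
    by_contra hc
    have h2 := derivMon_supp_le j (hd :: t) _ hc
    have h3 : DegLexLt (dHat [j] (hd :: t)) (dHat [j] u) :=
      dHat_mono [j] (List.cons_ne_nil _ _) hu hv
    rcases h2 with h2|h2
    · exact degLexLt_irrefl _ (h2 ▸ h3)
    · exact degLexLt_irrefl _ (degLexLt_trans h2 h3)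

theorem Dop_bound (j : J) {f : MonoidAlgebra k (FreeMonoid (Letter J X))}
    {u : List (Letter J X)} (hu : u ≠ []) (hb : Bd f u) :
    Bd (Dop j f) (dHat [j] u) ∧ coeffW (Dop j f) (dHat [j] u) = coeffW f u := by
  constructor
  · intro w hw
    rw [coeffW_Dop, Finsupp.sum] at hw
    have hex : ∃ b ∈ f.coeff.support, f.coeff b * coeffW (derivMon j (FreeMonoid.toList b) :
        MonoidAlgebra k (FreeMonoid (Letter J X))) w ≠ 0 := by
      by_contra hno
      push_neg at hno
      exact hw (Finset.sum_eq_zero hno)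
    obtain ⟨b, hbmem, hbne⟩ := hex
    have hcd : coeffW (derivMon j (FreeMonoid.toList b) :
        MonoidAlgebra k (FreeMonoid (Letter J X))) w ≠ 0 := fun hz => hbne (by rw [hz, mul_zero])
    have hbu : FreeMonoid.toList b = u ∨ DegLexLt (FreeMonoid.toList b) u := by
      apply hb
      rw [coeffW, FreeMonoid.ofList_toList]
      exact Finsupp.mem_support_iff.mp hbmem
    rcases hbu with hbu|hbu
    · rw [hbu] at hcd
      exact derivMon_supp_le j u w hcd
    · cases hbl : FreeMonoid.toList b with
      | nil => rw [hbl] at hcd; exact absurd (coeffW_zero w) hcd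
      | cons hd t =>
        rw [hbl] at hcd hbu
        have h2 := derivMon_supp_le j (hd :: t) w hcd
        have h3 : DegLexLt (dHat [j] (hd :: t)) (dHat [j] u) :=
          dHat_mono [j] (List.cons_ne_nil _ _) hu hbu
        rcases h2 with h2|h2
        · exact Or.inr (h2 ▸ h3)
        · exact Or.inr (degLexLt_trans h2 h3)
  · rw [coeffW_Dop]
    rw [Finsupp.sum_eq_single (FreeMonoid.ofList u)
      (fun b hbne hbnu => ?_) (fun _ => zero_mul _)]
    · rw [FreeMonoid.toList_ofList, derivMon_coeff_dHat j hu, mul_one]; rfl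
    · have hbu : FreeMonoid.toList b = u ∨ DegLexLt (FreeMonoid.toList b) u := by
        apply hb
        rw [coeffW, FreeMonoid.ofList_toList]
        exact hbne
      rcases hbu with hbu|hbu
      · exact absurd (by rw [← hbu, FreeMonoid.ofList_toList]) hbnu
      · rw [derivMon_coeff_lt j hu hbu, mul_zero]

theorem Dops_bound (jb : List J) {f : MonoidAlgebra k (FreeMonoid (Letter J X))}
    {u : List (Letter J X)} (hu : u ≠ []) (hb : Bd f u) :
    Bd (Dops jb f) (dHat jb u) ∧ coeffW (Dops jb f) (dHat jb u) = coeffW f u := by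
  induction jb with
  | nil =>
    rw [dHat_nilops]
    exact ⟨hb, rfl⟩
  | cons j jb ih =>
    have h1 := Dop_bound j (dHat_ne_nil jb hu) ih.1
    rw [dHat_dHat] at h1
    have h2 : Dops (j :: jb) f = Dop j (Dops jb f) := rfl
    rw [h2]
    exact ⟨h1.1, h1.2.trans ih.2⟩

theorem sandwich_bound (p q : List (Letter J X)) {f : MonoidAlgebra k (FreeMonoid (Letter J X))}
    {u : List (Letter J X)} (hb : Bd f u) :
    Bd (monoW p * f * monoW q) (p ++ u ++ q) ∧
      coeffW (monoW p * f * monoW q) (p ++ u ++ q) = coeffW f u := by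
  constructor
  · intro z hz
    obtain ⟨w, rfl, hc⟩ := coeffW_sandwich_supp p q f z hz
    rcases hb w hc with rfl|hlt
    · exact Or.inl rfl
    · exact Or.inr (degLexLt_append p q hlt)
  · exact coeffW_sandwich p q f u

end AuxOrder2

/-- The `D`-ideal generated by `S`, as a `k`-submodule of `D(X)`. -/
noncomputable def DIdealSub (S : Set (MonoidAlgebra k (FreeMonoid (Letter J X)))) :
    Submodule k (MonoidAlgebra k (FreeMonoid (Letter J X))) where
  carrier := {f | InDIdeal S f}
  add_mem' := fun h1 h2 => InDIdeal.add h1 h2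
  zero_mem' := InDIdeal.zero
  smul_mem' := fun c _ h => InDIdeal.smul c h


/-! ### Leading term existence and uniqueness -/

section AuxMain
variable [LinearOrder J] [LinearOrder X]

theorem isLT_unique {f : MonoidAlgebra k (FreeMonoid (Letter J X))} {u v : List (Letter J X)}
    (h1 : IsLT f u) (h2 : IsLT f v) : u = v := by
  by_contra hne
  exact degLexLt_asymm (h1.2 v h2.1 (fun he => hne he.symm)) (h2.2 u h1.1 hne)

theorem finset_max (s : Finset (List (Letter J X))) (hs : s.Nonempty) :
    ∃ m ∈ s, ∀ v ∈ s, v ≠ m → DegLexLt v m := by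
  classical
  induction s using Finset.induction_on with
  | empty => exact absurd hs (by simp)
  | @insert a s hnm ih =>
    rcases s.eq_empty_or_nonempty with rfl|hsn
    · refine ⟨a, Finset.mem_insert_self _ _, ?_⟩
      intro v hv hne
      rcases Finset.mem_insert.mp hv with rfl|hv'
      · exact absurd rfl hne
      · simp at hv'
    · obtain ⟨m, hm, hmax⟩ := ih hsn
      rcases degLexLt_trichot a m with h|h|h
      · refine ⟨m, Finset.mem_insert_of_mem hm, ?_⟩
        intro v hv hne
        rcases Finset.mem_insert.mp hv with rfl|hv'
        · exact h
        · exact hmax v hv' hne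
      · refine ⟨m, Finset.mem_insert_of_mem hm, ?_⟩
        intro v hv hne
        rcases Finset.mem_insert.mp hv with rfl|hv'
        · exact absurd h hne
        · exact hmax v hv' hne
      · refine ⟨a, Finset.mem_insert_self _ _, ?_⟩
        intro v hv hne
        rcases Finset.mem_insert.mp hv with rfl|hv'
        · exact absurd rfl hne
        · by_cases hvm : v = m
          · exact hvm ▸ h
          · exact degLexLt_trans (hmax v hv' hvm) h

theorem exists_isLT (f : MonoidAlgebra k (FreeMonoid (Letter J X))) (hf : f ≠ 0) :
    ∃ u, IsLT f u := by
  classical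
  have hsupp : (f.coeff.support.image FreeMonoid.toList).Nonempty := by
    rw [Finset.image_nonempty]
    exact Finsupp.support_nonempty_iff.mpr (fun h0 => hf (MonoidAlgebra.coeff_eq_zero.mp h0))
  obtain ⟨m, hm, hmax⟩ := finset_max _ hsupp
  obtain ⟨x, hx, rfl⟩ := Finset.mem_image.mp hm
  refine ⟨FreeMonoid.toList x, ?_, ?_⟩
  · rw [coeffW, FreeMonoid.ofList_toList]
    exact Finsupp.mem_support_iff.mp hx
  · intro v hv hne
    refine hmax v ?_ hne
    exact Finset.mem_image.mpr ⟨FreeMonoid.ofList v, Finsupp.mem_support_iff.mpr hv,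
      FreeMonoid.toList_ofList v⟩

end AuxMain

theorem inideal_dops (S : Set (MonoidAlgebra k (FreeMonoid (Letter J X))))
    {s : MonoidAlgebra k (FreeMonoid (Letter J X))} (hs : s ∈ S) (jb : List J) :
    InDIdeal S (Dops jb s) := by
  induction jb with
  | nil => exact InDIdeal.of s hs
  | cons j jb ih => exact InDIdeal.deriv j ih

theorem inideal_sdword (S : Set (MonoidAlgebra k (FreeMonoid (Letter J X))))
    {s : MonoidAlgebra k (FreeMonoid (Letter J X))} (hs : s ∈ S)
    (a b : List (Letter J X)) (jb : List J) :
    InDIdeal S (monoW a * Dops jb s * monoW b) :=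
  InDIdeal.mul_right _ (InDIdeal.mul_left _ (inideal_dops S hs jb))

theorem mk_monoW_sum (S : Set (MonoidAlgebra k (FreeMonoid (Letter J X))))
    (f : MonoidAlgebra k (FreeMonoid (Letter J X)))
    (N : Submodule k (MonoidAlgebra k (FreeMonoid (Letter J X)) ⧸ DIdealSub S))
    (hf : ∀ w, coeffW f w ≠ 0 → Submodule.Quotient.mk (p := DIdealSub S) (monoW w) ∈ N) :
    Submodule.Quotient.mk (p := DIdealSub S) f ∈ N := by
  classical
  have hrep : f = f.coeff.sum (fun x c => c • (monoW (FreeMonoid.toList x) :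
      MonoidAlgebra k (FreeMonoid (Letter J X)))) := by
    conv_lhs => rw [← MonoidAlgebra.sum_coeff_single f]
    refine Finsupp.sum_congr (fun x _ => ?_)
    rw [monoW, FreeMonoid.ofList_toList, MonoidAlgebra.smul_single', mul_one]
  rw [show Submodule.Quotient.mk (p := DIdealSub S) f
      = Submodule.Quotient.mk (p := DIdealSub S)
        (f.coeff.sum fun x c => c • monoW (FreeMonoid.toList x)) from congrArg _ hrep,
    ← Submodule.mkQ_apply, map_finsuppSum, Finsupp.sum]
  refine Submodule.sum_mem N (fun x hx => ?_)
  rw [map_smul]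
  refine Submodule.smul_mem N _ (hf (FreeMonoid.toList x) ?_)
  rw [coeffW, FreeMonoid.ofList_toList]
  exact Finsupp.mem_support_iff.mp hx

/-- Composition–Diamond lemma, (ii) ⇒ (iii): if leading terms of elements of `Id(S)` all
contain some `d^ī(s̄)`, then `Irr(S)` is a `k`-linear basis of `D(X)/Id(S)`. -/
theorem stmt14 [LinearOrder J] [LinearOrder X]
    [IsWellOrder J (· < ·)] [IsWellOrder X (· < ·)]
    (S : Set (MonoidAlgebra k (FreeMonoid (Letter J X))))
    (hS : ∀ s ∈ S, ∃ sb, MonicW s sb)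
    (h : ∀ f, InDIdeal S f → f ≠ 0 → ∀ fb, IsLT f fb →
      ∃ (a b : List (Letter J X)) (ib : List J), ∃ s ∈ S, ∃ sb, IsLT s sb ∧
        fb = a ++ dHat ib sb ++ b) :
    LinearIndependent k (fun u : Irr S =>
      Submodule.Quotient.mk (p := DIdealSub S) (monoW u.1)) ∧
    Submodule.span k (Set.range fun u : Irr S =>
      Submodule.Quotient.mk (p := DIdealSub S) (monoW u.1)) = ⊤ := by
  classical
  rcases subsingleton_or_nontrivial k with hk|hk
  · constructor
    · rw [linearIndependent_iff]
      intro l _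
      exact Finsupp.ext fun a => Subsingleton.elim _ _
    · haveI := Module.subsingleton k
        (MonoidAlgebra k (FreeMonoid (Letter J X)) ⧸ DIdealSub S)
      rw [eq_top_iff]
      intro x _
      rw [Subsingleton.elim x 0]
      exact Submodule.zero_mem _
  · -- the span of the image of Irr S
    have span_mem : ∀ u : List (Letter J X),
        Submodule.Quotient.mk (p := DIdealSub S) (monoW u) ∈ Submodule.span k
          (Set.range fun u : Irr S =>
            Submodule.Quotient.mk (p := DIdealSub S) (monoW u.1)) := by
      intro u
      refine degLexLt_wf.induction (C := fun u =>
        Submodule.Quotient.mk (p := DIdealSub S) (monoW u) ∈ Submodule.span k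
          (Set.range fun u : Irr S =>
            Submodule.Quotient.mk (p := DIdealSub S) (monoW u.1))) u ?_
      intro u IH
      by_cases hu : u ∈ Irr S
      · exact Submodule.subset_span ⟨⟨u, hu⟩, rfl⟩
      · have hex : ∃ a b ib, ∃ s ∈ S, ∃ sb, IsLT s sb ∧ u = a ++ dHat ib sb ++ b :=
          not_not.mp hu
        obtain ⟨a, b, ib, s, hsS, sb, hsb, hu_eq⟩ := hex
        obtain ⟨sb', hmon⟩ := hS s hsS
        have hsbeq : sb' = sb := isLT_unique hmon.1 hsb
        rw [hsbeq] at hmon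
        by_cases hnil : sb = []
        · subst hnil
          have hs1 : s = 1 := by
            apply MonoidAlgebra.ext
            apply Finsupp.ext
            intro x
            by_cases hx : FreeMonoid.toList x = []
            · have hx1 : x = 1 := by
                have := congrArg FreeMonoid.ofList hx
                rwa [FreeMonoid.ofList_toList] at this
              subst hx1
              have h1 : coeffW s [] = 1 := hmon.2
              show s.coeff 1 = (1 : MonoidAlgebra k (FreeMonoid (Letter J X))).coeff 1
              have h2 : s.coeff 1 = 1 := h1
              rw [h2, MonoidAlgebra.one_def, MonoidAlgebra.single_apply, if_pos rfl]
            · have hc0 : coeffW s (FreeMonoid.toList x) = 0 := by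
                by_contra hc
                have := hmon.1.2 _ hc hx
                rcases this with h|⟨hlen, hlex⟩
                · simp at h
                · cases hlex
              rw [coeffW, FreeMonoid.ofList_toList] at hc0
              rw [hc0, MonoidAlgebra.one_def, MonoidAlgebra.single_apply,
                if_neg (fun h1 => hx (by rw [← h1]; rfl))]
          have hid : InDIdeal S (monoW u) := by
            have h2 := InDIdeal.mul_left (monoW u) (InDIdeal.of s hsS)
            rwa [hs1, mul_one] at h2
          rw [(Submodule.Quotient.mk_eq_zero _).mpr hid]
          exact Submodule.zero_mem _
        · set g := monoW a * Dops ib s * monoW b with hg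
          have hBds : Bd s sb := fun w hw => by
            by_cases hwe : w = sb
            · exact Or.inl hwe
            · exact Or.inr (hmon.1.2 w hw hwe)
          have hD := Dops_bound ib hnil hBds
          have hSW := sandwich_bound a b hD.1
          have hcoeff : coeffW g u = 1 := by
            rw [hg, hu_eq, hSW.2, hD.2, hmon.2]
          have hBdg : Bd g u := hu_eq ▸ hSW.1
          have hid : InDIdeal S g := inideal_sdword S hsS a b ib
          have hmk : Submodule.Quotient.mk (p := DIdealSub S) (monoW u)
              = Submodule.Quotient.mk (p := DIdealSub S) (monoW u - g) := by
            rw [Submodule.Quotient.eq, sub_sub_cancel]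
            exact hid
          rw [hmk]
          refine mk_monoW_sum S _ _ (fun w hw => ?_)
          have hw_lt : DegLexLt w u := by
            by_cases hwu : w = u
            · subst hwu
              rw [coeffW_sub, coeffW_monoW_self, hcoeff, sub_self] at hw
              exact absurd rfl hw
            · rw [coeffW_sub, coeffW_monoW_ne hwu] at hw
              have hgw : coeffW g w ≠ 0 := fun h0 => hw (by rw [h0, zero_sub, neg_zero])
              rcases hBdg w hgw with rfl|hlt
              · exact absurd rfl hwu
              · exact hlt
          exact IH w hw_lt
    constructor
    · rw [linearIndependent_iff]
      intro l hl
      by_contra hl0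
      set f : MonoidAlgebra k (FreeMonoid (Letter J X)) := l.sum fun u c => c • monoW u.1
        with hf
      have hco : ∀ u0 : Irr S, coeffW f u0.1 = l u0 := by
        intro u0
        rw [hf, coeffW, MonoidAlgebra.coeff_finsuppSum, Finsupp.sum_apply]
        rw [Finsupp.sum_eq_single u0 (fun u hu hne => ?_) (fun _ => by simp)]
        · rw [MonoidAlgebra.coeff_smul_apply, smul_eq_mul, ← coeffW, coeffW_monoW_self, mul_one]
        · rw [MonoidAlgebra.coeff_smul_apply, smul_eq_mul, ← coeffW,
            coeffW_monoW_ne (fun he => hne (Subtype.ext he.symm)), mul_zero]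
      have hsupp : ∀ w, coeffW f w ≠ 0 → w ∈ Irr S := by
        intro w hw
        rw [hf, coeffW, MonoidAlgebra.coeff_finsuppSum, Finsupp.sum_apply, Finsupp.sum] at hw
        have hex : ∃ u ∈ l.support, (l u • (monoW u.1 : MonoidAlgebra k
            (FreeMonoid (Letter J X)))).coeff (FreeMonoid.ofList w) ≠ 0 := by
          by_contra hno
          push_neg at hno
          exact hw (Finset.sum_eq_zero hno)
        obtain ⟨u, _, hune⟩ := hex
        rw [MonoidAlgebra.coeff_smul_apply, smul_eq_mul, ← coeffW] at hune
        by_cases hwe : w = u.1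
        · exact hwe ▸ u.2
        · rw [coeffW_monoW_ne hwe, mul_zero] at hune
          exact absurd rfl hune
      have hmkf : Finsupp.linearCombination k (fun u : Irr S =>
          Submodule.Quotient.mk (p := DIdealSub S) (monoW u.1)) l
          = Submodule.Quotient.mk (p := DIdealSub S) f := by
        rw [Finsupp.linearCombination_apply, hf, ← Submodule.mkQ_apply, map_finsuppSum]
        refine Finsupp.sum_congr (fun u _ => ?_)
        rw [map_smul]
        rfl
      have hfI : InDIdeal S f := by
        rw [hmkf] at hl
        exact (Submodule.Quotient.mk_eq_zero _).mp hl
      obtain ⟨u0, hu0⟩ : ∃ u0, l u0 ≠ 0 := by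
        by_contra hno
        push_neg at hno
        exact hl0 (Finsupp.ext hno)
      have hf0 : f ≠ 0 := fun h0 => hu0 (by rw [← hco u0, h0, coeffW_zero])
      obtain ⟨fb, hfb⟩ := exists_isLT f hf0
      obtain ⟨a, b, ib, s, hsS, sb, hsb, hdecomp⟩ := h f hfI hf0 fb hfb
      exact hsupp fb hfb.1 ⟨a, b, ib, s, hsS, sb, hsb, hdecomp⟩
    · rw [eq_top_iff]
      rintro x -
      obtain ⟨f, rfl⟩ := Submodule.Quotient.mk_surjective (DIdealSub S) x
      exact mk_monoW_sum S f _ (fun w _ => span_mem w)
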